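/- Let A be a nontrivial arrangement of d lines with intersection points p_1,...,p_r. Define for each line L_j the incidence vector v_j ∈ Q^r with i-th coordinate 1 if p_i ∈ L_j and 0 otherwise. Then the vectors v_1,...,v_d are linearly independent over Q. -/

import Mathlib

open scoped BigOperators

/-- Points and lines of the projective plane over `k` (lines via duality). -/
abbrev ProjPlane (k : Type*) [Field k] := Projectivization k (Fin 3 → k)

/-- Incidence between a point `p` and a line `L` (given by its dual coefficients):
all representatives pair to zero under the standard bilinear form. -/
def Incid {k : Type*} [Field k] (p L : ProjPlane k) : Prop :=
  ∀ v ∈ p.submodule, ∀ w ∈ L.submodule, ∑ i, v i * w i = 0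

/-- Number of lines of the arrangement `A` passing through the point `p`. -/
noncomputable def linesThrough {k : Type*} [Field k]
    (A : Finset (ProjPlane k)) (p : ProjPlane k) : ℕ :=
  {L : ProjPlane k | L ∈ A ∧ Incid p L}.ncard

/-- `tm A m` is the number of `m`-points of the arrangement `A`. -/
noncomputable def tm {k : Type*} [Field k]
    (A : Finset (ProjPlane k)) (m : ℕ) : ℕ :=
  {p : ProjPlane k | linesThrough A p = m}.ncard

/-- The arrangement is trivial if all its lines pass through a common point. -/
def IsTrivial {k : Type*} [Field k] (A : Finset (ProjPlane k)) : Prop :=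
  ∃ p : ProjPlane k, ∀ L ∈ A, Incid p L

/-- First Chern number of a line arrangement. -/
noncomputable def c1sq {k : Type*} [Field k] (A : Finset (ProjPlane k)) : ℤ :=
  9 - 5 * (A.card : ℤ) +
    ∑ m ∈ Finset.Icc 2 A.card, (3 * (m : ℤ) - 4) * (tm A m : ℤ)

/-- Second Chern number of a line arrangement. -/
noncomputable def c2 {k : Type*} [Field k] (A : Finset (ProjPlane k)) : ℤ :=
  3 - 2 * (A.card : ℤ) +
    ∑ m ∈ Finset.Icc 2 A.card, ((m : ℤ) - 1) * (tm A m : ℤ)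

/-!
Write `v_L` for the incidence vector of a line `L`. Two distinct lines of the plane meet in
exactly one point, so `v_L ⬝ v_M = 1` for `L ≠ M`, while nontriviality puts two intersection
points on every line, so `v_L ⬝ v_L ≥ 2`. A relation `∑ g_L v_L = 0` then gives
`0 = ‖∑ g_L v_L‖² = (∑ g_L)² + ∑ g_L² (v_L ⬝ v_L - 1)`, a sum of nonnegative terms, so all
`g_L = 0`.
-/

open Projectivization Finset

section GramMatrix

variable {R ι κ : Type*} [CommRing R] [Fintype ι] [Fintype κ]

theorem sum_smul_dotProduct_sum_smul {v : ι → κ → R} {c : R}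
    (hoff : ∀ i j, i ≠ j → v i ⬝ᵥ v j = c) (g : ι → R) :
    (∑ i, g i • v i) ⬝ᵥ (∑ i, g i • v i) =
      c * (∑ i, g i) ^ 2 + ∑ i, g i ^ 2 * (v i ⬝ᵥ v i - c) := by
  classical
  calc (∑ i, g i • v i) ⬝ᵥ (∑ i, g i • v i)
        = ∑ i, ∑ j, g i * g j * (v i ⬝ᵥ v j) := by
        simp only [sum_dotProduct, dotProduct_sum, smul_dotProduct, dotProduct_smul, smul_eq_mul,
          mul_sum]
        rw [sum_comm]
        exact sum_congr rfl fun _ _ => sum_congr rfl fun _ _ => by ring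
    _ = ∑ i, ∑ j, (c * (g i * g j) + if i = j then g i ^ 2 * (v i ⬝ᵥ v i - c) else 0) := by
        refine sum_congr rfl fun i _ => sum_congr rfl fun j _ => ?_
        split_ifs with h
        · subst h; ring
        · rw [hoff i j h]; ring
    _ = c * (∑ i, g i) ^ 2 + ∑ i, g i ^ 2 * (v i ⬝ᵥ v i - c) := by
        simp only [sum_add_distrib, sum_ite_eq, mem_univ, if_true, ← mul_sum, sq, sum_mul_sum]

variable [LinearOrder R] [IsStrictOrderedRing R]

theorem linearIndependent_of_dotProduct_eq_of_lt {v : ι → κ → R} {c : R} (hc : 0 ≤ c)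
    (hoff : ∀ i j, i ≠ j → v i ⬝ᵥ v j = c) (hdiag : ∀ i, c < v i ⬝ᵥ v i) :
    LinearIndependent R v := by
  rw [Fintype.linearIndependent_iff]
  intro g hg i
  have hterm : ∀ j ∈ univ, 0 ≤ g j ^ 2 * (v j ⬝ᵥ v j - c) := fun j _ =>
    mul_nonneg (sq_nonneg _) (sub_nonneg.mpr (hdiag j).le)
  have hsum : ∑ j, g j ^ 2 * (v j ⬝ᵥ v j - c) = 0 := by
    have h := sum_smul_dotProduct_sum_smul hoff g
    rw [hg, zero_dotProduct] at h
    linarith [mul_nonneg hc (sq_nonneg (∑ j, g j)), sum_nonneg hterm]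
  have hi := (sum_eq_zero_iff_of_nonneg hterm).mp hsum i (mem_univ i)
  exact pow_eq_zero_iff two_ne_zero |>.mp <|
    (mul_eq_zero.mp hi).resolve_right (sub_ne_zero.mpr (hdiag i).ne')

end GramMatrix

section ProjectivePlane

variable {k : Type*} [Field k]

theorem incid_iff_orthogonal (p L : ProjPlane k) : Incid p L ↔ p.orthogonal L := by
  induction p using Projectivization.ind with | h x hx =>
  induction L using Projectivization.ind with | h y hy =>
  rw [orthogonal_mk, Incid, submodule_mk, submodule_mk]
  refine ⟨fun h => h x (Submodule.mem_span_singleton_self x) y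
    (Submodule.mem_span_singleton_self y), fun h _ hv _ hw => ?_⟩
  obtain ⟨a, rfl⟩ := Submodule.mem_span_singleton.mp hv
  obtain ⟨b, rfl⟩ := Submodule.mem_span_singleton.mp hw
  change (a • x) ⬝ᵥ (b • y) = 0
  rw [smul_dotProduct, dotProduct_smul, h, smul_zero, smul_zero]

theorem incid_cross_left [DecidableEq k] {L M : ProjPlane k} (h : L ≠ M) :
    Incid (cross L M) L :=
  (incid_iff_orthogonal _ _).mpr (cross_orthogonal_left h)

theorem incid_cross_right [DecidableEq k] {L M : ProjPlane k} (h : L ≠ M) :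
    Incid (cross L M) M :=
  (incid_iff_orthogonal _ _).mpr (cross_orthogonal_right h)

theorem eq_of_incid_of_incid {p q L M : ProjPlane k} (hLM : L ≠ M)
    (hpL : Incid p L) (hpM : Incid p M) (hqL : Incid q L) (hqM : Incid q M) : p = q := by
  simp only [incid_iff_orthogonal] at hpL hpM hqL hqM
  exact (Configuration.ofField.eq_or_eq_of_orthogonal hpL hqL hpM hqM).resolve_right hLM

end ProjectivePlane

section Arrangement

variable {k : Type*} [Field k] {A : Finset (ProjPlane k)} {p L M : ProjPlane k}

theorem two_le_linesThrough (hL : L ∈ A) (hM : M ∈ A) (hLM : L ≠ M)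
    (hpL : Incid p L) (hpM : Incid p M) : 2 ≤ linesThrough A p := by
  have hsub : ({L, M} : Set (ProjPlane k)) ⊆ {N | N ∈ A ∧ Incid p N} := by
    rintro N (rfl | rfl)
    exacts [⟨hL, hpL⟩, ⟨hM, hpM⟩]
  rw [← Set.ncard_pair hLM]
  exact Set.ncard_le_ncard hsub (A.finite_toSet.subset fun _ hN => hN.1)

theorem exists_incid_incid_of_two_le_linesThrough (hp : 2 ≤ linesThrough A p) :
    ∃ L ∈ A, ∃ M ∈ A, L ≠ M ∧ Incid p L ∧ Incid p M := by
  obtain ⟨L, hL, M, hM, hLM⟩ := (Set.one_lt_ncard (A.finite_toSet.subset fun _ hN => hN.1)).mp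
    (one_lt_two.trans_le hp)
  exact ⟨L, hL.1, M, hM.1, hLM, hL.2, hM.2⟩

variable (A) in
theorem finite_setOf_two_le_linesThrough : {p | 2 ≤ linesThrough A p}.Finite := by
  classical
  refine ((A ×ˢ A).finite_toSet.image fun LM => cross LM.1 LM.2).subset fun p hp => ?_
  obtain ⟨L, hL, M, hM, hLM, hpL, hpM⟩ := exists_incid_incid_of_two_le_linesThrough hp
  exact ⟨(L, M), by simp [hL, hM],
    eq_of_incid_of_incid hLM (incid_cross_left hLM) (incid_cross_right hLM) hpL hpM⟩

noncomputable instance (A : Finset (ProjPlane k)) :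
    Fintype {p : ProjPlane k // 2 ≤ linesThrough A p} :=
  (finite_setOf_two_le_linesThrough A).fintype

theorem exists_intersectionPoint_incid_incid (hL : L ∈ A) (hM : M ∈ A) (hLM : L ≠ M) :
    ∃ p : {p // 2 ≤ linesThrough A p}, Incid p.1 L ∧ Incid p.1 M := by
  classical
  exact ⟨⟨cross L M, two_le_linesThrough hL hM hLM (incid_cross_left hLM)
    (incid_cross_right hLM)⟩, incid_cross_left hLM, incid_cross_right hLM⟩

theorem exists_ne_intersectionPoints_incid (hd : 2 ≤ A.card) (hnt : ¬ IsTrivial A)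
    (hL : L ∈ A) :
    ∃ p q : {p // 2 ≤ linesThrough A p}, p ≠ q ∧ Incid p.1 L ∧ Incid q.1 L := by
  obtain ⟨M, hM, hML⟩ := A.exists_mem_ne hd L
  obtain ⟨p, hpL, -⟩ := exists_intersectionPoint_incid_incid hL hM hML.symm
  obtain ⟨N, hN, hpN⟩ : ∃ N ∈ A, ¬ Incid p.1 N := by
    by_contra! h
    exact hnt ⟨p.1, h⟩
  have hLN : L ≠ N := by rintro rfl; exact hpN hpL
  obtain ⟨q, hqL, hqN⟩ := exists_intersectionPoint_incid_incid hL hN hLN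
  exact ⟨p, q, by rintro rfl; exact hpN hqN, hpL, hqL⟩

open scoped Classical in
noncomputable def incidenceVector (A : Finset (ProjPlane k)) (L : ProjPlane k) :
    {p // 2 ≤ linesThrough A p} → ℚ :=
  fun p => if Incid p.1 L then 1 else 0

open scoped Classical in
theorem incidenceVector_dotProduct (A : Finset (ProjPlane k)) (L M : ProjPlane k) :
    incidenceVector A L ⬝ᵥ incidenceVector A M =
      #{p : {p // 2 ≤ linesThrough A p} | Incid p.1 L ∧ Incid p.1 M} := by
  simp only [dotProduct, incidenceVector, ite_zero_mul_ite_zero, mul_one, sum_boole]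

theorem incidenceVector_dotProduct_of_ne (hL : L ∈ A) (hM : M ∈ A) (hLM : L ≠ M) :
    incidenceVector A L ⬝ᵥ incidenceVector A M = 1 := by
  classical
  obtain ⟨p₀, hp₀L, hp₀M⟩ := exists_intersectionPoint_incid_incid hL hM hLM
  rw [incidenceVector_dotProduct, Nat.cast_eq_one, card_eq_one]
  refine ⟨p₀, eq_singleton_iff_unique_mem.mpr ⟨by simp [hp₀L, hp₀M], fun p hp => ?_⟩⟩
  rw [mem_filter] at hp
  exact Subtype.ext (eq_of_incid_of_incid hLM hp.2.1 hp.2.2 hp₀L hp₀M)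

theorem one_lt_incidenceVector_dotProduct_self (hd : 2 ≤ A.card) (hnt : ¬ IsTrivial A)
    (hL : L ∈ A) : 1 < incidenceVector A L ⬝ᵥ incidenceVector A L := by
  classical
  obtain ⟨p, q, hpq, hpL, hqL⟩ := exists_ne_intersectionPoints_incid hd hnt hL
  rw [incidenceVector_dotProduct, Nat.one_lt_cast, one_lt_card]
  exact ⟨p, by simp [hpL], q, by simp [hqL], hpq⟩

end Arrangement

open scoped Classical in
/-- The incidence vectors (over ℚ) of the lines of a nontrivial arrangement,
indexed by the intersection points of the arrangement, are linearly independent. -/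
theorem stmt_2 {k : Type*} [Field k] (A : Finset (ProjPlane k))
    (hd : 2 ≤ A.card) (hnt : ¬ IsTrivial A) :
    LinearIndependent ℚ
      (fun (L : A) (p : {p : ProjPlane k // 2 ≤ linesThrough A p}) =>
        if Incid p.1 L.1 then (1 : ℚ) else 0) :=
  linearIndependent_of_dotProduct_eq_of_lt (v := fun L : A => incidenceVector A L) zero_le_one
    (fun L M hLM => incidenceVector_dotProduct_of_ne L.2 M.2 (Subtype.coe_ne_coe.mpr hLM))
    fun L => one_lt_incidenceVector_dotProduct_self hd hnt L.2
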